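/- Corollary (case p = 1 of the Main Lemma): Let λ ∈ (0, 1), γ > 0 and t > 0. Then (γ / Γ(λ)) · ∫_0^t (t-s)^{λ-1} · E_λ(γ s^λ) ds ≤ E_λ(γ t^λ). -/

import Mathlib

open MeasureTheory

/-- The Mittag-Leffler function `E_α(x) = ∑_{n=0}^∞ x^n / Γ(nα + 1)`. -/
noncomputable def mittagLeffler (α x : ℝ) : ℝ :=
  ∑' n : ℕ, x ^ n / Real.Gamma ((n : ℝ) * α + 1)

/-!
Integrate the series of `E_λ(c s^λ)` term by term against the kernel `(t - s)^(λ-1)`. By the Beta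
integral, `∫_0^t (t - s)^(λ-1) s^(nλ) ds = Γ(λ) Γ(nλ+1) / Γ((n+1)λ+1) · t^((n+1)λ)`, so after
multiplying by `c / Γ(λ)` the `n`-th term becomes the `(n+1)`-st term of `E_λ(c t^λ)`. Hence the
left-hand side equals `E_λ(c t^λ) - 1` for every real `c`. The interchange of sum and integral is
justified by the same computation with `|c|`, and the series converge by the ratio test, the ratio
being controlled by the log-convexity of `Γ`.
-/

open Real Set Filter

theorem Real.rpow_mul_Gamma_add_one_le {x α : ℝ} (hx : 0 < x) (hα : 0 < α) :
    x ^ α * Gamma (x + 1) ≤ Gamma (x + 1 + α) := by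
  have hslope := convexOn_log_Gamma.slope_mono_adjacent (mem_Ioi.2 hx)
    (mem_Ioi.2 (by positivity : 0 < x + 1 + α)) (lt_add_one x) (lt_add_of_pos_right _ hα)
  have hlog : log (Gamma (x + 1)) - log (Gamma x) = log x := by
    rw [Gamma_add_one hx.ne', log_mul hx.ne' (Gamma_pos_of_pos hx).ne', add_sub_cancel_right]
  simp only [Function.comp_apply, add_sub_cancel_left, div_one, hlog,
    le_div_iff₀ hα] at hslope
  rw [← log_le_log_iff (by positivity) (Gamma_pos_of_pos (by positivity)),
    log_mul (by positivity) (Gamma_pos_of_pos (by positivity)).ne', log_rpow hx]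
  linarith

theorem summable_pow_div_Gamma {α : ℝ} (hα : 0 < α) (x β : ℝ) :
    Summable fun n : ℕ => x ^ n / Gamma (n * α + β) := by
  refine summable_of_ratio_norm_eventually_le (r := 1 / 2) (by norm_num) ?_
  have hlin : Tendsto (fun n : ℕ => n * α + β - 1) atTop atTop :=
    tendsto_atTop_add_const_right _ _
      (tendsto_atTop_add_const_right _ _ (tendsto_natCast_atTop_atTop.atTop_mul_const hα))
  filter_upwards [hlin.eventually_gt_atTop 0,
    ((tendsto_rpow_atTop hα).comp hlin).eventually_ge_atTop (2 * |x|)] with n hpos hlarge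
  set y := (n : ℝ) * α + β - 1
  have hΓ : 0 < Gamma (y + 1) := Gamma_pos_of_pos (by positivity)
  have hratio := rpow_mul_Gamma_add_one_le hpos hα
  have hy : (n : ℝ) * α + β = y + 1 := by ring
  have hy' : ((n + 1 : ℕ) : ℝ) * α + β = y + 1 + α := by push_cast; ring
  have hΓ' : 0 < Gamma (y + 1 + α) := Gamma_pos_of_pos (by positivity)
  rw [hy, hy', norm_div, norm_div, norm_pow, norm_pow, Real.norm_eq_abs,
    Real.norm_of_nonneg hΓ.le, Real.norm_of_nonneg hΓ'.le, div_le_iff₀ hΓ']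
  calc |x| ^ (n + 1) = 1 / 2 * (|x| ^ n / Gamma (y + 1)) * (2 * |x| * Gamma (y + 1)) := by
        field_simp; ring
    _ ≤ 1 / 2 * (|x| ^ n / Gamma (y + 1)) * (y ^ α * Gamma (y + 1)) := by gcongr; exact hlarge
    _ ≤ 1 / 2 * (|x| ^ n / Gamma (y + 1)) * Gamma (y + 1 + α) := by gcongr

theorem integral_rpow_mul_sub_rpow {a b t : ℝ} (ha : 0 < a) (hb : 0 < b) (ht : 0 < t) :
    ∫ s in (0 : ℝ)..t, s ^ (a - 1) * (t - s) ^ (b - 1) =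
      t ^ (a + b - 1) * ProbabilityTheory.beta a b := by
  have h := Complex.betaIntegral_scaled a b ht
  rw [Complex.betaIntegral_eq_Gamma_mul_div _ _ (by simpa) (by simpa)] at h
  apply Complex.ofReal_injective
  rw [← intervalIntegral.integral_ofReal]
  convert h using 1
  · refine intervalIntegral.integral_congr fun s hs => ?_
    rw [uIcc_of_le ht.le] at hs
    push_cast
    rw [Complex.ofReal_cpow hs.1, Complex.ofReal_cpow (sub_nonneg.2 hs.2)]
    push_cast; rfl
  · rw [ProbabilityTheory.beta]
    push_cast
    simp only [Complex.ofReal_cpow ht.le, ← Complex.Gamma_ofReal]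
    push_cast; rfl

theorem integral_sub_rpow_mul_pow_div_Gamma {lam t : ℝ} (hlam : 0 < lam) (ht : 0 < t)
    (c : ℝ) (n : ℕ) :
    ∫ s in (0 : ℝ)..t, (t - s) ^ (lam - 1) * ((c * s ^ lam) ^ n / Gamma (n * lam + 1)) =
      Gamma lam * t ^ lam * (c * t ^ lam) ^ n / Gamma (n * lam + lam + 1) := by
  calc _ = ∫ s in (0 : ℝ)..t,
        c ^ n / Gamma (n * lam + 1) * (s ^ (n * lam + 1 - 1) * (t - s) ^ (lam - 1)) := by
        refine intervalIntegral.integral_congr fun s hs => ?_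
        rw [uIcc_of_le ht.le] at hs
        rw [add_sub_cancel_right, mul_pow, mul_comm (n : ℝ), rpow_mul hs.1, rpow_natCast]
        ring
    _ = c ^ n / Gamma (n * lam + 1) *
          (t ^ (n * lam + 1 + lam - 1) * ProbabilityTheory.beta (n * lam + 1) lam) := by
        rw [intervalIntegral.integral_const_mul,
          integral_rpow_mul_sub_rpow (by positivity) hlam ht]
    _ = _ := by
        rw [ProbabilityTheory.beta, show (n : ℝ) * lam + 1 + lam - 1 = lam + lam * n by ring,
          show (n : ℝ) * lam + 1 + lam = n * lam + lam + 1 by ring, rpow_add ht,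
          rpow_mul ht.le, rpow_natCast]
        field_simp
        ring

theorem integral_sub_rpow_mul_mittagLeffler {lam t : ℝ} (hlam : 0 < lam) (ht : 0 < t) (c : ℝ) :
    c / Gamma lam * ∫ s in (0 : ℝ)..t, (t - s) ^ (lam - 1) * mittagLeffler lam (c * s ^ lam) =
      mittagLeffler lam (c * t ^ lam) - 1 := by
  set F : ℕ → ℝ → ℝ := fun n s => (t - s) ^ (lam - 1) * ((c * s ^ lam) ^ n / Gamma (n * lam + 1))
  have hF_int : ∀ n, IntervalIntegrable (F n) volume 0 t := by
    have hkernel : IntervalIntegrable (fun s => (t - s) ^ (lam - 1)) volume 0 t := by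
      simpa using ((intervalIntegral.intervalIntegrable_rpow' (a := 0) (b := t)
        (by linarith : -1 < lam - 1)).comp_sub_left t).symm
    intro n
    exact hkernel.mul_continuousOn
      (((continuous_const.mul (continuous_rpow_const hlam.le)).pow n).div_const _).continuousOn
  have hF_norm : ∀ n, ∫ s in Ioc 0 t, ‖F n s‖ =
      Gamma lam * t ^ lam * (|c| * t ^ lam) ^ n / Gamma (n * lam + lam + 1) := by
    intro n
    rw [← integral_sub_rpow_mul_pow_div_Gamma hlam ht |c| n, intervalIntegral.integral_of_le ht.le]
    refine setIntegral_congr_fun measurableSet_Ioc fun s hs => ?_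
    have hΓ : 0 < Gamma (n * lam + 1) := Gamma_pos_of_pos (by positivity)
    simp only [F, norm_mul, norm_div, norm_pow, Real.norm_eq_abs, abs_of_pos hΓ,
      abs_of_nonneg (rpow_nonneg (sub_nonneg.2 hs.2) _), abs_of_nonneg (rpow_nonneg hs.1.le _)]
  have hF_sum : Summable fun n => ∫ s in Ioc 0 t, ‖F n s‖ := by
    simp_rw [hF_norm, mul_div_assoc, add_assoc]
    exact (summable_pow_div_Gamma hlam _ (lam + 1)).mul_left _
  have hswap : ∫ s in (0 : ℝ)..t, ∑' n, F n s = ∑' n, ∫ s in (0 : ℝ)..t, F n s := by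
    simp_rw [intervalIntegral.integral_of_le ht.le]
    exact (integral_tsum_of_summable_integral_norm (fun n => (hF_int n).1) hF_sum).symm
  have hterm : ∀ n : ℕ, c / Gamma lam * ∫ s in (0 : ℝ)..t, F n s =
      (c * t ^ lam) ^ (n + 1) / Gamma ((n + 1 : ℕ) * lam + 1) := by
    intro n
    have hΓ : 0 < Gamma lam := Gamma_pos_of_pos hlam
    rw [integral_sub_rpow_mul_pow_div_Gamma hlam ht]
    push_cast
    field_simp
    ring_nf
  simp only [mittagLeffler, ← tsum_mul_left]
  rw [hswap, ← tsum_mul_left, tsum_congr hterm, (summable_pow_div_Gamma hlam _ 1).tsum_eq_zero_add]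
  simp

theorem main_lemma_p_one_general (lam γ t : ℝ) (hlam : lam ∈ Set.Ioo (0 : ℝ) 1)
    (ht : 0 < t) :
    γ / Real.Gamma lam *
        ∫ s in (0 : ℝ)..t, (t - s) ^ (lam - 1) * mittagLeffler lam (γ * s ^ lam)
      ≤ mittagLeffler lam (γ * t ^ lam) := by
  linarith [integral_sub_rpow_mul_mittagLeffler hlam.1 ht γ]

/-- Corollary (case `p = 1` of the Main Lemma): for `λ ∈ (0,1)`, `γ > 0`, `t > 0`,
`(γ / Γ(λ)) ∫_0^t (t-s)^{λ-1} E_λ(γ s^λ) ds ≤ E_λ(γ t^λ)`. -/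
theorem main_lemma_p_one (lam γ t : ℝ) (hlam : lam ∈ Set.Ioo (0 : ℝ) 1)
    (hγ : 0 < γ) (ht : 0 < t) :
    γ / Real.Gamma lam *
        ∫ s in (0 : ℝ)..t, (t - s) ^ (lam - 1) * mittagLeffler lam (γ * s ^ lam)
      ≤ mittagLeffler lam (γ * t ^ lam) :=
  main_lemma_p_one_general lam γ t hlam ht
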